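/- arXiv:2205.14521 — 4 statements merged into one kernel-verified Lean document; each statement's English description precedes it below -/
import Mathlib

section
/- The greedy dynamic program computing β(s,t) via the recursion β(s,t) = max( β(s-1,t)·P(s,ε), β(s-1,t-1)·max_{a≠ε} P(s,a) ) yields exactly the maximum probability max{ P(w) : |w| = S, |Γ'(w)| = T } of a length-S token sequence reducing to a length-T text, for every S ≥ T ≥ 0. In particular, the length-control decoding algorithm with beam size 1, when tokens are not merged (only ε removed), is exact. -/
/-!
Conditioning on the last token splits the maximum over length-`S + 1` sequences into a maximum
over the last token `a` of `P (S + 1) a` times the maximum over length-`S` prefixes; the prefix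
must reduce to length `T` if `a = ε` and to length `T - 1` otherwise. Because the weight is a
product over independent slots, the factor `P (S + 1) a` pulls out of the inner maximum, and the
resulting recursion is exactly the one defining `betaDP`.
-/

open Finset

/-- The dynamic-programming recursion for `β`: initialization `β(0,0) = 1`,
`β(0,t) = 0` for `t ≥ 1`, and
`β(s,t) = max( β(s-1,t)·P(s,ε), β(s-1,t-1)·max_{a≠ε} P(s,a) )`,
with the second term omitted when `t = 0`. -/
noncomputable def betaDP {σ : Type*} [Fintype σ] [DecidableEq σ]
    (P : ℕ → σ → NNReal) (ε : σ) : ℕ → ℕ → NNReal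
  | 0, 0 => 1
  | 0, _ + 1 => 0
  | s + 1, 0 => betaDP P ε s 0 * P (s + 1) ε
  | s + 1, t + 1 =>
      max (betaDP P ε s (t + 1) * P (s + 1) ε)
        (betaDP P ε s t * (univ.filter (· ≠ ε)).sup (P (s + 1)))

namespace Finset

variable {α σ ι : Type*} [SemilatticeSup α] [OrderBot α]

theorem sup_filter_eq_sup_ite (s : Finset ι) (p : ι → Prop) [DecidablePred p] (f : ι → α) :
    (s.filter p).sup f = s.sup fun i => if p i then f i else ⊥ := by
  rw [sup_ite, sup_bot, sup_bot_eq]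

variable [Fintype σ]

theorem sup_univ_fin_snoc {n : ℕ} (g : (Fin (n + 1) → σ) → α) :
    univ.sup g = univ.sup fun a : σ => univ.sup fun w : Fin n → σ => g (Fin.snoc w a) := by
  rw [← map_univ_equiv (Fin.snocEquiv fun _ => σ), sup_map, ← univ_product_univ,
    sup_product_left]
  rfl

theorem sup_filter_univ_fin_snoc {n : ℕ} (p : (Fin (n + 1) → σ) → Prop) [DecidablePred p]
    (g : (Fin (n + 1) → σ) → α) :
    (univ.filter p).sup g = univ.sup fun a : σ =>
      (univ.filter fun w : Fin n → σ => p (Fin.snoc w a)).sup fun w => g (Fin.snoc w a) := by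
  simp only [sup_filter_eq_sup_ite]
  exact sup_univ_fin_snoc _

theorem sup_univ_eq_sup_sup_filter_ne [DecidableEq σ] (f : σ → α) (b : σ) :
    univ.sup f = f b ⊔ (univ.filter (· ≠ b)).sup f := by
  rw [filter_ne', ← sup_insert, insert_erase (mem_univ b)]

end Finset

theorem List.length_filter_ne_ofFn_snoc {σ : Type*} [DecidableEq σ] {n : ℕ} (ε : σ)
    (w : Fin n → σ) (a : σ) :
    ((List.ofFn (Fin.snoc w a : Fin (n + 1) → σ)).filter (· ≠ ε)).length =
      ((List.ofFn w).filter (· ≠ ε)).length + if a = ε then 0 else 1 := by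
  rw [List.ofFn_succ', List.concat_eq_append]
  by_cases ha : a = ε <;> simp [ha]

theorem Fin.prod_univ_snoc {σ M : Type*} [CommMonoid M] {n : ℕ} (P : ℕ → σ → M)
    (w : Fin n → σ) (a : σ) :
    ∏ i : Fin (n + 1), P (i.1 + 1) (Fin.snoc (α := fun _ => σ) w a i) =
      (∏ i, P (i.1 + 1) (w i)) * P (n + 1) a := by
  simp [Fin.prod_univ_castSucc]

section MaxReducedProb

variable {σ : Type*} [Fintype σ] [DecidableEq σ]

/-- `max{ P(w) : |w| = S, |Γ'(w)| = T }`, with `P(w) = ∏ i, P (i + 1) (w i)`. -/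
noncomputable def maxReducedProb (P : ℕ → σ → NNReal) (ε : σ) (S T : ℕ) : NNReal :=
  (univ.filter fun w : Fin S → σ => ((List.ofFn w).filter (· ≠ ε)).length = T).sup
    fun w => ∏ i, P (i.1 + 1) (w i)

variable (P : ℕ → σ → NNReal) (ε : σ)

theorem maxReducedProb_zero_zero : maxReducedProb P ε 0 0 = 1 := by
  simp [maxReducedProb]

theorem maxReducedProb_zero_succ (T : ℕ) : maxReducedProb P ε 0 (T + 1) = 0 := by
  simp [maxReducedProb]

theorem maxReducedProb_succ (S T : ℕ) :
    maxReducedProb P ε (S + 1) T =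
      max (maxReducedProb P ε S T * P (S + 1) ε)
        ((univ.filter (· ≠ ε)).sup fun a =>
          (univ.filter fun w : Fin S → σ =>
              ((List.ofFn w).filter (· ≠ ε)).length + 1 = T).sup
            (fun w => ∏ i, P (i.1 + 1) (w i)) * P (S + 1) a) := by
  rw [maxReducedProb, sup_filter_univ_fin_snoc, sup_univ_eq_sup_sup_filter_ne _ ε]
  refine congrArg₂ (· ⊔ ·) ?_ (sup_congr rfl fun a ha => ?_)
  · simp only [List.length_filter_ne_ofFn_snoc, Fin.prod_univ_snoc, if_pos, add_zero,
      maxReducedProb, NNReal.finset_sup_mul]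
  · simp only [List.length_filter_ne_ofFn_snoc, Fin.prod_univ_snoc, if_neg (mem_filter.1 ha).2,
      NNReal.finset_sup_mul]

theorem maxReducedProb_succ_zero (S : ℕ) :
    maxReducedProb P ε (S + 1) 0 = maxReducedProb P ε S 0 * P (S + 1) ε := by
  simp [maxReducedProb_succ]

theorem maxReducedProb_succ_succ (S T : ℕ) :
    maxReducedProb P ε (S + 1) (T + 1) =
      max (maxReducedProb P ε S (T + 1) * P (S + 1) ε)
        (maxReducedProb P ε S T * (univ.filter (· ≠ ε)).sup (P (S + 1))) := by
  simp only [maxReducedProb_succ, NNReal.mul_finset_sup, add_left_inj]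
  rfl

theorem betaDP_eq_maxReducedProb : ∀ S T, betaDP P ε S T = maxReducedProb P ε S T
  | 0, 0 => by rw [betaDP, maxReducedProb_zero_zero]
  | 0, T + 1 => by rw [betaDP, maxReducedProb_zero_succ]
  | S + 1, 0 => by rw [betaDP, maxReducedProb_succ_zero, betaDP_eq_maxReducedProb S 0]
  | S + 1, T + 1 => by
    rw [betaDP, maxReducedProb_succ_succ, betaDP_eq_maxReducedProb S T,
      betaDP_eq_maxReducedProb S (T + 1)]

end MaxReducedProb

theorem betaDP_exact_general {σ : Type*} [Fintype σ] [DecidableEq σ]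
    (P : ℕ → σ → NNReal) (ε : σ)
    (S T : ℕ) :
    betaDP P ε S T =
      (univ.filter fun w : Fin S → σ =>
          ((List.ofFn w).filter (· ≠ ε)).length = T).sup
        fun w => ∏ i, P (i.1 + 1) (w i) :=
  betaDP_eq_maxReducedProb P ε S T

/-- The greedy dynamic program `β` yields exactly the maximum probability
`max{ P(w) : |w| = S, |Γ'(w)| = T }` of a length-`S` token sequence whose blank-removed
reduction has length `T`, for every `S ≥ T ≥ 0`: the length-control algorithm with beam
size 1 (removing blanks only, without merging) is exact. -/
theorem betaDP_exact {σ : Type*} [Fintype σ] [DecidableEq σ]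
    (P : ℕ → σ → NNReal) (ε : σ) (hex : ∃ a : σ, a ≠ ε)
    (S T : ℕ) (hTS : T ≤ S) :
    betaDP P ε S T =
      (univ.filter fun w : Fin S → σ =>
          ((List.ofFn w).filter (· ≠ ε)).length = T).sup
        fun w => ∏ i, P (i.1 + 1) (w i) :=
  betaDP_exact_general P ε S T
end

section
/- There exist a finite alphabet Σ = {I, like, coding, ε} and per-slot probability distributions P(1,·), P(2,·) such that the greedy (beam size 1) length-control algorithm applied with the CTC reduction Γ (which removes ε and merges consecutive repeated tokens) does not return the most probable length-2 output over 2 slots. Concretely, with P(1,I)=0.39, P(1,like)=0.4, P(1,coding)=0.1, P(1,ε)=0.11 and P(2,I)=0.1, P(2,like)=0.9, P(2,coding)=0, P(2,ε)=0, the optimal output is 'I like' with probability 0.351, but the greedy algorithm selects 'like' at slot 1 and is then forced to output 'like I' with probability 0.4·0.1 = 0.04 < 0.351. -/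
/-- The alphabet Σ = {I, like, coding, ε}. -/
inductive Tok : Type
  | I | like | coding | eps
  deriving DecidableEq

/-- Per-slot probabilities for slot 1. -/
noncomputable def P1 : Tok → ℝ
  | .I => 0.39
  | .like => 0.4
  | .coding => 0.1
  | .eps => 0.11

/-- Per-slot probabilities for slot 2. -/
noncomputable def P2 : Tok → ℝ
  | .I => 0.1
  | .like => 0.9
  | .coding => 0
  | .eps => 0

/-- The CTC reduction Γ: merge consecutive repeated tokens, then remove blanks. -/
def gammaTok (w : List Tok) : List Tok :=
  (w.destutter (· ≠ ·)).filter (· ≠ Tok.eps)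

/-- With the concrete distributions `P1`, `P2`, the greedy (beam size 1)
length-control algorithm under the CTC reduction fails: `P1` and `P2` are probability
distributions, the greedy choice at slot 1 is `like` (strictly most probable), the greedy
continuation at slot 2 (a non-blank token different from `like`) is `I`, so greedy outputs
`[like, I]`, a valid length-2 output of probability `0.04`; but `[I, like]` is a valid
length-2 output of probability `0.351`, which is optimal among all valid length-2 outputs,
and `0.04 < 0.351`. -/
theorem greedy_length_control_not_exact :
    (P1 .I + P1 .like + P1 .coding + P1 .eps = 1) ∧
    (P2 .I + P2 .like + P2 .coding + P2 .eps = 1) ∧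
    (∀ a : Tok, a ≠ .like → P1 a < P1 .like) ∧
    (∀ a : Tok, a ≠ .eps → a ≠ .like → a ≠ .I → P2 a < P2 .I) ∧
    (gammaTok [.like, .I]).length = 2 ∧
    P1 .like * P2 .I = 0.04 ∧
    (gammaTok [.I, .like]).length = 2 ∧
    P1 .I * P2 .like = 0.351 ∧
    (∀ a b : Tok, (gammaTok [a, b]).length = 2 → P1 a * P2 b ≤ 0.351) ∧
    (0.04 : ℝ) < 0.351 := by
  refine ⟨by simp [P1]; norm_num, by simp [P2]; norm_num, ?_, ?_, by decide, by simp [P1, P2]; norm_num, by decide, by simp [P1, P2]; norm_num, ?_, by norm_num⟩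
  · intro a ha; cases a <;> simp_all [P1] <;> norm_num
  · intro a h1 h2 h3; cases a <;> simp_all [P2] <;> norm_num
  · intro a b h; cases a <;> cases b <;> simp_all [gammaTok, P1, P2, List.destutter] <;> norm_num
end

section
/- For the CTC reduction Γ, appending a token a to a nonempty sequence w with last token b changes the reduced length as follows: |Γ(w ++ [a])| = |Γ(w)| if a = ε or a = b, and |Γ(w ++ [a])| = |Γ(w)| + 1 if a ≠ ε and a ≠ b. -/
/-- The CTC reduction Γ: merge consecutive equal tokens, then remove blanks. -/
def gammaCTC {σ : Type*} [DecidableEq σ] (ε : σ) (w : List σ) : List σ :=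
  (w.destutter (· ≠ ·)).filter (· ≠ ε)

lemma destutter'_append_singleton {σ : Type*} [DecidableEq σ] (l : List σ) :
    ∀ (b a : σ), List.destutter' (· ≠ ·) b (l ++ [a]) =
      if a = (b :: l).getLast (by simp) then List.destutter' (· ≠ ·) b l
      else List.destutter' (· ≠ ·) b l ++ [a] := by
  induction l with
  | nil =>
    intro b a
    simp only [List.nil_append, List.destutter'_singleton, List.destutter'_nil,
      List.getLast_singleton]
    by_cases h : a = b <;> simp [h, Ne.symm]
  | cons c t ih =>
    intro b a
    have hlast : (b :: c :: t).getLast (by simp) = (c :: t).getLast (by simp) :=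
      List.getLast_cons (by simp)
    simp only [List.cons_append, List.destutter'_cons, hlast]
    by_cases hbc : b ≠ c
    · rw [if_pos hbc, if_pos hbc, ih c a]
      by_cases h : a = (c :: t).getLast (by simp) <;> simp [h]
    · rw [if_neg hbc, if_neg hbc, ih b a]
      push_neg at hbc
      subst hbc
      rcases t with _ | ⟨d, t⟩
      · simp
      · rfl

/-- For the CTC reduction `Γ`, appending a token `a` to a nonempty sequence
`w` with last token `b` changes the reduced length as follows:
`|Γ(w ++ [a])| = |Γ(w)|` if `a = ε` or `a = b`, and
`|Γ(w ++ [a])| = |Γ(w)| + 1` if `a ≠ ε` and `a ≠ b`. -/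
theorem gammaCTC_length_append
    {σ : Type*} [Fintype σ] [DecidableEq σ] (ε : σ)
    (w : List σ) (hw : w ≠ []) (a : σ) :
    ((a = ε ∨ a = w.getLast hw) →
      (gammaCTC ε (w ++ [a])).length = (gammaCTC ε w).length) ∧
    ((a ≠ ε ∧ a ≠ w.getLast hw) →
      (gammaCTC ε (w ++ [a])).length = (gammaCTC ε w).length + 1) := by
  obtain ⟨h, t, rfl⟩ := List.exists_cons_of_ne_nil hw
  have key : (h :: t ++ [a]).destutter (· ≠ ·) =
      if a = (h :: t).getLast (by simp) then (h :: t).destutter (· ≠ ·)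
      else (h :: t).destutter (· ≠ ·) ++ [a] := by
    rw [List.cons_append, List.destutter_cons', List.destutter_cons',
      destutter'_append_singleton]
  constructor
  · rintro (rfl | hab)
    · unfold gammaCTC
      rw [key]
      by_cases h' : a = (h :: t).getLast (by simp)
      · rw [if_pos h']
      · rw [if_neg h', List.filter_append]
        simp
    · unfold gammaCTC
      rw [key, if_pos hab]
  · rintro ⟨haε, hab⟩
    unfold gammaCTC
    rw [key, if_neg hab, List.filter_append]
    simp [haε]
end

section
/- Surjectivity of the CTC reduction onto bounded-length blank-free texts: for any blank-free text y of length t and any S ≥ 2t - 1 (S ≥ t if y has no consecutive equal tokens), there exists a token sequence w of length exactly S with Γ(w) = y. -/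
/-! A blank-free text `y` has the preimage `separateRepeats ε y`, obtained by putting a blank
between any two equal neighbours: this word has no two equal neighbours, so Γ only deletes its
blanks, and it has length at most `2 * y.length - 1` (exactly `y.length` when `y` has no
repeats). Leading blanks are invisible to Γ, so padding on the left reaches every larger length. -/

namespace List

variable {α : Type*} [DecidableEq α]

theorem destutter_ne_cons (a : α) (l : List α) :
    (a :: l).destutter (· ≠ ·) =
      if l.head? = some a then l.destutter (· ≠ ·) else a :: l.destutter (· ≠ ·) := by
  cases l with
  | nil => simp
  | cons b t =>
    by_cases hab : a = b
    · subst hab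
      simp [destutter_cons']
    · simp [destutter_cons', hab, Ne.symm hab]

end List

section CTC

variable {σ : Type*} [DecidableEq σ] (ε : σ)

theorem gammaCTC_blank_cons (w : List σ) : gammaCTC ε (ε :: w) = gammaCTC ε w := by
  rw [gammaCTC, List.destutter_ne_cons]
  split_ifs <;> simp [gammaCTC]

theorem gammaCTC_replicate_blank_append (k : ℕ) (w : List σ) :
    gammaCTC ε (List.replicate k ε ++ w) = gammaCTC ε w := by
  induction k with
  | zero => rfl
  | succ k ih => rw [List.replicate_succ, List.cons_append, gammaCTC_blank_cons, ih]

theorem gammaCTC_of_isChain {w : List σ} (hw : w.IsChain (· ≠ ·)) :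
    gammaCTC ε w = w.filter (· ≠ ε) := by
  rw [gammaCTC, List.destutter_of_isChain _ _ hw]

def separateRepeats : List σ → List σ
  | [] => []
  | [a] => [a]
  | a :: b :: t =>
    if a = b then a :: ε :: separateRepeats (b :: t) else a :: separateRepeats (b :: t)

variable {ε}

@[simp]
theorem head?_separateRepeats (y : List σ) : (separateRepeats ε y).head? = y.head? := by
  rcases y with _ | ⟨a, _ | ⟨b, t⟩⟩
  · rfl
  · rfl
  · rw [separateRepeats]
    split_ifs <;> rfl

theorem isChain_separateRepeats {y : List σ} (hy : ε ∉ y) :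
    (separateRepeats ε y).IsChain (· ≠ ·) := by
  induction y with
  | nil => exact List.isChain_nil
  | cons a t ih =>
    have ht : ε ∉ t := fun h => hy (List.mem_cons_of_mem a h)
    rcases t with _ | ⟨b, s⟩
    · exact List.isChain_singleton a
    · have hb : b ≠ ε := fun h => hy (by simp [h])
      have hrest : (separateRepeats ε (b :: s)).IsChain (· ≠ ·) := ih ht
      have hhead : ∀ c ∈ (separateRepeats ε (b :: s)).head?, ε ≠ c := by simpa using hb.symm
      rw [separateRepeats]
      split_ifs with hab
      · subst hab
        exact List.isChain_cons_cons.2 ⟨hb, List.isChain_cons.2 ⟨hhead, hrest⟩⟩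
      · exact List.isChain_cons.2 ⟨by simpa using hab, hrest⟩

theorem filter_separateRepeats {y : List σ} (hy : ε ∉ y) :
    (separateRepeats ε y).filter (· ≠ ε) = y := by
  induction y with
  | nil => rfl
  | cons a t ih =>
    have ha : a ≠ ε := fun h => hy (by simp [h])
    have hrest := ih (fun h => hy (List.mem_cons_of_mem a h))
    rcases t with _ | ⟨b, s⟩
    · simp [separateRepeats, ha]
    · rw [separateRepeats]
      split_ifs <;> simpa [ha] using hrest

theorem length_separateRepeats_le (y : List σ) :
    (separateRepeats ε y).length ≤ 2 * y.length - 1 := by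
  induction y with
  | nil => simp [separateRepeats]
  | cons a t ih =>
    rcases t with _ | ⟨b, s⟩
    · simp [separateRepeats]
    · simp only [List.length_cons] at ih ⊢
      rw [separateRepeats]
      split_ifs <;> simp only [List.length_cons] <;> omega

theorem separateRepeats_of_isChain {y : List σ} (hy : y.IsChain (· ≠ ·)) :
    separateRepeats ε y = y := by
  induction y with
  | nil => rfl
  | cons a t ih =>
    rcases t with _ | ⟨b, s⟩
    · rfl
    · obtain ⟨hab, hrest⟩ := List.isChain_cons_cons.1 hy
      rw [separateRepeats, if_neg hab, ih hrest]

theorem gammaCTC_separateRepeats {y : List σ} (hy : ε ∉ y) :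
    gammaCTC ε (separateRepeats ε y) = y := by
  rw [gammaCTC_of_isChain ε (isChain_separateRepeats hy), filter_separateRepeats hy]

end CTC

theorem gammaCTC_surjective_on_blank_free_general
    {σ : Type*} [DecidableEq σ] (ε : σ)
    (y : List σ) (hy : ε ∉ y) (S : ℕ)
    (hS : 2 * y.length - 1 ≤ S ∨ (y.Chain' (· ≠ ·) ∧ y.length ≤ S)) :
    ∃ w : List σ, w.length = S ∧ gammaCTC ε w = y := by
  have hp : (separateRepeats ε y).length ≤ S := by
    rcases hS with hS | ⟨hchain, hS⟩
    · exact (length_separateRepeats_le y).trans hS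
    · rwa [separateRepeats_of_isChain hchain]
  refine ⟨List.replicate (S - (separateRepeats ε y).length) ε ++ separateRepeats ε y, ?_, ?_⟩
  · rw [List.length_append, List.length_replicate]
    omega
  · rw [gammaCTC_replicate_blank_append, gammaCTC_separateRepeats hy]

/-- Surjectivity of the CTC reduction onto bounded-length blank-free texts:
for any blank-free text `y` of length `t` and any `S` with `S ≥ 2t - 1` (or merely `S ≥ t`
if `y` has no two consecutive equal tokens), there exists a token sequence `w` of length
exactly `S` with `Γ(w) = y`. -/
theorem gammaCTC_surjective_on_blank_free
    {σ : Type*} [Fintype σ] [DecidableEq σ] (ε : σ)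
    (y : List σ) (hy : ε ∉ y) (S : ℕ)
    (hS : 2 * y.length - 1 ≤ S ∨ (y.Chain' (· ≠ ·) ∧ y.length ≤ S)) :
    ∃ w : List σ, w.length = S ∧ gammaCTC ε w = y :=
  gammaCTC_surjective_on_blank_free_general ε y hy S hS
end
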